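/- arXiv:1211.3318 — 4 statements merged into one kernel-verified Lean document; each statement's English description precedes it below -/
import Mathlib

section
/- Let f : ℝⁿ → ℝⁿ be continuous, let T ≥ 0, and let x : [0,T] → ℝⁿ be continuously differentiable with x'(t) = f(x(t)) for all t ∈ [0,T]. Let μ be the occupation measure of the solution, i.e. the pushforward under the map t ↦ x(t) of the Lebesgue measure on [0,T]. Then for every continuously differentiable function v : ℝⁿ → ℝ one has ∫ ∇v(y) · f(y) dμ(y) = v(x(T)) − v(x(0)). -/
/-!
Along the trajectory the chain rule gives `d/dt v (x t) = ⟪∇v (x t), f (x t)⟫`. Integrating a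
continuous function against the pushforward of Lebesgue measure on `[a, b]` is integrating its
composite with `x` over `[a, b]`, so the left-hand side is `∫ t in 0..T, d/dt v (x t)`, and the
fundamental theorem of calculus finishes the proof.
-/

open MeasureTheory Set
open scoped RealInnerProductSpace

section OccupationMeasure

variable {α : Type*} [MeasurableSpace α]

noncomputable def occupationMeasure (x : ℝ → α) (a b : ℝ) : Measure α :=
  Measure.map x (volume.restrict (Icc a b))

theorem integral_occupationMeasure [TopologicalSpace α] [BorelSpace α] {g : α → ℝ}
    (hg : Continuous g) {x : ℝ → α} {a b : ℝ} (hx : ContinuousOn x (Icc a b)) (hab : a ≤ b) :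
    ∫ y, g y ∂occupationMeasure x a b = ∫ t in a..b, g (x t) := by
  rw [occupationMeasure, integral_map (hx.aemeasurable measurableSet_Icc)
    hg.aestronglyMeasurable, intervalIntegral.integral_of_le hab, integral_Icc_eq_integral_Ioc]

end OccupationMeasure

variable {E : Type*} [NormedAddCommGroup E] [InnerProductSpace ℝ E] [CompleteSpace E]

theorem ContDiff.continuous_gradient {v : E → ℝ} (hv : ContDiff ℝ 1 v) :
    Continuous (gradient v) :=
  (InnerProductSpace.toDual ℝ E).symm.continuous.comp (hv.continuous_fderiv one_ne_zero)

theorem HasGradientAt.comp_hasDerivAt {v : E → ℝ} {g y' : E} {x : ℝ → E} {t : ℝ}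
    (hv : HasGradientAt v g (x t)) (hx : HasDerivAt x y' t) :
    HasDerivAt (v ∘ x) ⟪g, y'⟫ t := by
  simpa only [hv.hasFDerivAt.fderiv, ← hv.fderiv_apply] using
    hv.differentiableAt.hasFDerivAt.comp_hasDerivAt t hx

theorem integral_inner_gradient_occupationMeasure [MeasurableSpace E] [BorelSpace E]
    {f : E → E} (hf : Continuous f) {a b : ℝ} (hab : a ≤ b) {x : ℝ → E}
    (hx : ∀ t ∈ Icc a b, HasDerivAt x (f (x t)) t) {v : E → ℝ} (hv : ContDiff ℝ 1 v) :
    ∫ y, ⟪gradient v y, f y⟫ ∂occupationMeasure x a b = v (x b) - v (x a) := by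
  have hx_cont : ContinuousOn x (Icc a b) := fun t ht ↦ (hx t ht).continuousAt.continuousWithinAt
  have hintegrand : Continuous fun y ↦ ⟪gradient v y, f y⟫ := hv.continuous_gradient.inner hf
  rw [integral_occupationMeasure hintegrand hx_cont hab]
  refine intervalIntegral.integral_eq_sub_of_hasDerivAt (f := v ∘ x) (fun t ht ↦ ?_)
    (hintegrand.comp_continuousOn (uIcc_of_le hab ▸ hx_cont)).intervalIntegrable
  exact (hv.differentiable one_ne_zero _).hasGradientAt.comp_hasDerivAt
    (hx t (uIcc_of_le hab ▸ ht))

/-- If `f` is continuous, `x` is a continuously differentiable solution of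
`x' = f(x)` on `[0,T]`, and `μ` is the occupation measure of the solution (the pushforward
of Lebesgue measure on `[0,T]` under `x`), then for every `C¹` function `v`,
`∫ ⟪∇v(y), f(y)⟫ dμ(y) = v(x T) - v(x 0)`. -/
theorem occupation_measure_dynamics {n : ℕ}
    (f : EuclideanSpace ℝ (Fin n) → EuclideanSpace ℝ (Fin n)) (hf : Continuous f)
    (T : ℝ) (hT : 0 ≤ T)
    (x : ℝ → EuclideanSpace ℝ (Fin n))
    (hx : ∀ t ∈ Set.Icc (0 : ℝ) T, HasDerivAt x (f (x t)) t)
    (μ : Measure (EuclideanSpace ℝ (Fin n)))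
    (hμ : μ = Measure.map x (volume.restrict (Set.Icc (0 : ℝ) T)))
    (v : EuclideanSpace ℝ (Fin n) → ℝ) (hv : ContDiff ℝ 1 v) :
    ∫ y, ⟪gradient v y, f y⟫ ∂μ = v (x T) - v (x 0) := by
  subst hμ
  exact integral_inner_gradient_occupationMeasure hf hT hx hv
end

section
/- In the PWA optimal control setting, for every admissible process (T, u, x) and every continuously differentiable function v : ℝⁿ → ℝ, the local occupation measures μ₁, …, μ_r satisfy Σ_{i=1}^r ∫_{X_i × U} ∇v(y) · (A_i y + a_i + B_i w) dμ_i(y,w) = v(x(T)) − v(x(0)). -/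
/-!
Pushing the occupation measure `μᵢ` forward turns its integral into the time integral of
`⟪∇v(x t), Aᵢ x t + aᵢ + Bᵢ u t⟫` over the times spent in the closed cell `Xᵢ`, and the
dynamics replace the second factor by `ẋ t` almost everywhere. Since time spent on overlaps is
negligible and the cells cover the trajectory, the sum over `i` is `∫₀ᵀ ⟪∇v(x t), ẋ t⟫ dt`.
This is the fundamental theorem of calculus for `v ∘ x`, which is absolutely continuous because
`v` is Lipschitz on the compact set `x([0,T])`.
-/

open MeasureTheory Set
open scoped RealInnerProductSpace

/-- An admissible process for the piecewise-affine optimal control problem with cells `X i`,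
control set `U`, dynamics `ẋ = A i x + a i + B i u` on `X i`, and terminal set `XT`.
The trajectory `x` is absolutely continuous, encoded as the integral of an integrable
velocity `d` that agrees a.e. with the piecewise-affine vector field. -/
structure PWAProcess (n m r : ℕ)
    (X : Fin r → Set (EuclideanSpace ℝ (Fin n)))
    (U : Set (EuclideanSpace ℝ (Fin m)))
    (A : Fin r → (EuclideanSpace ℝ (Fin n) →L[ℝ] EuclideanSpace ℝ (Fin n)))
    (a : Fin r → EuclideanSpace ℝ (Fin n))
    (B : Fin r → (EuclideanSpace ℝ (Fin m) →L[ℝ] EuclideanSpace ℝ (Fin n)))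
    (XT : Set (EuclideanSpace ℝ (Fin n))) where
  /-- terminal time -/
  T : ℝ
  T_pos : 0 < T
  /-- control -/
  u : ℝ → EuclideanSpace ℝ (Fin m)
  u_meas : Measurable u
  u_mem : ∀ t ∈ Icc (0 : ℝ) T, u t ∈ U
  /-- state trajectory -/
  x : ℝ → EuclideanSpace ℝ (Fin n)
  /-- a.e. derivative of the trajectory -/
  d : ℝ → EuclideanSpace ℝ (Fin n)
  d_meas : Measurable d
  d_intble : IntegrableOn d (Icc (0 : ℝ) T)
  /-- absolute continuity: `x` is the integral of its a.e. derivative -/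
  x_eq : ∀ t ∈ Icc (0 : ℝ) T, x t = x 0 + ∫ s in (0 : ℝ)..t, d s
  x_mem : ∀ t ∈ Icc (0 : ℝ) T, x t ∈ ⋃ i, X i
  /-- the ODE holds for almost every time -/
  ode : ∀ᵐ t ∂(volume.restrict (Icc (0 : ℝ) T)),
      ∀ i, x t ∈ X i → d t = A i (x t) + a i + B i (u t)
  /-- times spent on overlaps of cells are negligible -/
  overlap : volume {t ∈ Icc (0 : ℝ) T | ∃ i j, i ≠ j ∧ x t ∈ X i ∧ x t ∈ X j} = 0
  terminal : x T ∈ XT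

/-- The `i`-th local occupation measure of an admissible process:
`μ i (A) = Leb {t ∈ [0,T] : x t ∈ X i and (x t, u t) ∈ A}`. -/
noncomputable def PWAProcess.occ {n m r : ℕ}
    {X : Fin r → Set (EuclideanSpace ℝ (Fin n))}
    {U : Set (EuclideanSpace ℝ (Fin m))}
    {A : Fin r → (EuclideanSpace ℝ (Fin n) →L[ℝ] EuclideanSpace ℝ (Fin n))}
    {a : Fin r → EuclideanSpace ℝ (Fin n)}
    {B : Fin r → (EuclideanSpace ℝ (Fin m) →L[ℝ] EuclideanSpace ℝ (Fin n))}
    {XT : Set (EuclideanSpace ℝ (Fin n))}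
    (P : PWAProcess n m r X U A a B XT) (i : Fin r) :
    Measure (EuclideanSpace ℝ (Fin n) × EuclideanSpace ℝ (Fin m)) :=
  Measure.map (fun t => (P.x t, P.u t))
    (volume.restrict {t | t ∈ Icc (0 : ℝ) P.T ∧ P.x t ∈ X i})

open Filter Function

theorem AbsolutelyContinuousOnInterval.of_dist_le_mul {X Y : Type*} [PseudoMetricSpace X]
    [PseudoMetricSpace Y] {f : ℝ → X} {g : ℝ → Y} {a b K : ℝ}
    (hg : AbsolutelyContinuousOnInterval g a b)
    (hfg : ∀ s ∈ uIcc a b, ∀ t ∈ uIcc a b, dist (f s) (f t) ≤ K * dist (g s) (g t)) :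
    AbsolutelyContinuousOnInterval f a b := by
  refine squeeze_zero' (Eventually.of_forall fun _ => Finset.sum_nonneg fun _ _ => dist_nonneg)
    ?_ (by simpa only [mul_zero] using Tendsto.const_mul K hg)
  filter_upwards [mem_inf_of_right (mem_principal_self _)] with E hE
  rw [Finset.mul_sum]
  exact Finset.sum_le_sum fun i hi => hfg _ (hE.1 i hi).1 _ (hE.1 i hi).2

variable {E : Type*} [NormedAddCommGroup E] [NormedSpace ℝ E]

theorem intervalIntegral.dist_integral_le_dist_integral_norm {d : ℝ → E} {a s t : ℝ}
    (hs : IntervalIntegrable d volume a s) (ht : IntervalIntegrable d volume a t) :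
    dist (∫ r in a..s, d r) (∫ r in a..t, d r) ≤
      dist (∫ r in a..s, ‖d r‖) (∫ r in a..t, ‖d r‖) := by
  rw [dist_eq_norm, Real.dist_eq, intervalIntegral.integral_interval_sub_left hs ht,
    intervalIntegral.integral_interval_sub_left hs.norm ht.norm]
  exact intervalIntegral.norm_integral_le_abs_integral_norm

variable {v : E → ℝ} {x d : ℝ → E} {a b : ℝ}

theorem continuousOn_of_eq_add_primitive (hd : IntervalIntegrable d volume a b)
    (hx : ∀ t ∈ Icc a b, x t = x a + ∫ s in a..t, d s) : ContinuousOn x (Icc a b) :=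
  ((continuousOn_const.add (intervalIntegral.continuousOn_primitive_interval' hd
    left_mem_uIcc)).mono Icc_subset_uIcc).congr hx

theorem absolutelyContinuousOnInterval_comp_of_eq_add_primitive (hv : ContDiff ℝ 1 v)
    (hab : a ≤ b) (hd : IntervalIntegrable d volume a b)
    (hx : ∀ t ∈ Icc a b, x t = x a + ∫ s in a..t, d s) :
    AbsolutelyContinuousOnInterval (v ∘ x) a b := by
  obtain ⟨K, hK⟩ := hv.locallyLipschitz.locallyLipschitzOn.exists_lipschitzOnWith_of_compact
    (isCompact_Icc.image_of_continuousOn (continuousOn_of_eq_add_primitive hd hx))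
  refine (hd.norm.absolutelyContinuousOnInterval_intervalIntegral left_mem_uIcc).of_dist_le_mul
    (K := K) fun s hs t ht => ?_
  rw [uIcc_of_le hab] at hs ht
  calc dist (v (x s)) (v (x t)) ≤ K * dist (x s) (x t) :=
        hK.dist_le_mul _ (mem_image_of_mem x hs) _ (mem_image_of_mem x ht)
    _ ≤ K * dist (∫ r in a..s, ‖d r‖) (∫ r in a..t, ‖d r‖) := by
        rw [hx s hs, hx t ht, dist_add_left]
        gcongr
        exact intervalIntegral.dist_integral_le_dist_integral_norm
          (hd.mono_set (by rw [uIcc_of_le hab, uIcc_of_le hs.1]; exact Icc_subset_Icc_right hs.2))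
          (hd.mono_set (by rw [uIcc_of_le hab, uIcc_of_le ht.1]; exact Icc_subset_Icc_right ht.2))

theorem ae_hasDerivAt_comp_of_eq_add_primitive [CompleteSpace E] (hv : Differentiable ℝ v)
    (hd : IntervalIntegrable d volume a b)
    (hx : ∀ t ∈ Icc a b, x t = x a + ∫ s in a..t, d s) :
    ∀ᵐ t, t ∈ Ioc a b → HasDerivAt (v ∘ x) (fderiv ℝ v (x t) (d t)) t := by
  filter_upwards [hd.ae_hasDerivAt_integral, Measure.ae_ne volume b] with t ht htb hmem
  have hmem' : t ∈ Ioo a b := ⟨hmem.1, hmem.2.lt_of_ne htb⟩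
  have hxt : HasDerivAt x (d t) t := by
    refine ((ht (Ioc_subset_Icc_self.trans Icc_subset_uIcc hmem) a
      left_mem_uIcc).const_add (x a)).congr_of_eventuallyEq ?_
    filter_upwards [Ioo_mem_nhds hmem'.1 hmem'.2] with s hs using hx s (Ioo_subset_Icc_self hs)
  exact (hv (x t)).hasFDerivAt.comp_hasDerivAt t hxt

variable [CompleteSpace E]

theorem integral_fderiv_comp_eq_sub (hv : ContDiff ℝ 1 v) (hab : a ≤ b)
    (hd : IntervalIntegrable d volume a b)
    (hx : ∀ t ∈ Icc a b, x t = x a + ∫ s in a..t, d s) :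
    ∫ t in a..b, fderiv ℝ v (x t) (d t) = v (x b) - v (x a) := by
  refine (intervalIntegral.integral_congr_ae ?_).trans
    (absolutelyContinuousOnInterval_comp_of_eq_add_primitive hv hab hd hx).integral_deriv_eq_sub
  filter_upwards [ae_hasDerivAt_comp_of_eq_add_primitive (hv.differentiable one_ne_zero) hd hx]
    with t ht hmem using (ht (uIoc_of_le hab ▸ hmem)).deriv.symm

theorem intervalIntegrable_fderiv_comp (hv : ContDiff ℝ 1 v) (hab : a ≤ b)
    (hd : IntervalIntegrable d volume a b)
    (hx : ∀ t ∈ Icc a b, x t = x a + ∫ s in a..t, d s) :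
    IntervalIntegrable (fun t => fderiv ℝ v (x t) (d t)) volume a b := by
  refine (absolutelyContinuousOnInterval_comp_of_eq_add_primitive hv hab hd hx
    ).intervalIntegrable_deriv.congr_ae ((ae_restrict_iff' measurableSet_uIoc).2 ?_)
  filter_upwards [ae_hasDerivAt_comp_of_eq_add_primitive (hv.differentiable one_ne_zero) hd hx]
    with t ht hmem using (ht (uIoc_of_le hab ▸ hmem)).deriv

namespace PWAProcess

variable {n m r : ℕ} {X : Fin r → Set (EuclideanSpace ℝ (Fin n))}
  {U : Set (EuclideanSpace ℝ (Fin m))}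
  {A : Fin r → (EuclideanSpace ℝ (Fin n) →L[ℝ] EuclideanSpace ℝ (Fin n))}
  {a : Fin r → EuclideanSpace ℝ (Fin n)}
  {B : Fin r → (EuclideanSpace ℝ (Fin m) →L[ℝ] EuclideanSpace ℝ (Fin n))}
  {XT : Set (EuclideanSpace ℝ (Fin n))} (P : PWAProcess n m r X U A a B XT)

def occSet (i : Fin r) : Set ℝ := {t | t ∈ Icc (0 : ℝ) P.T ∧ P.x t ∈ X i}

theorem intervalIntegrable_d : IntervalIntegrable P.d volume 0 P.T :=
  (intervalIntegrable_iff_integrableOn_Icc_of_le P.T_pos.le).2 P.d_intble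

theorem continuousOn_x : ContinuousOn P.x (Icc 0 P.T) :=
  continuousOn_of_eq_add_primitive P.intervalIntegrable_d P.x_eq

theorem measurableSet_occSet {i : Fin r} (hXi : IsClosed (X i)) : MeasurableSet (P.occSet i) :=
  (P.continuousOn_x.preimage_isClosed_of_isClosed isClosed_Icc hXi).measurableSet

theorem integral_occ {F : Type*} [NormedAddCommGroup F] [NormedSpace ℝ F] {i : Fin r}
    (hXi : IsClosed (X i)) {φ : EuclideanSpace ℝ (Fin n) × EuclideanSpace ℝ (Fin m) → F}
    (hφ : AEStronglyMeasurable φ (P.occ i)) :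
    ∫ p, φ p ∂(P.occ i) = ∫ t in P.occSet i, φ (P.x t, P.u t) :=
  integral_map (((P.continuousOn_x.mono fun _ ht => ht.1).aemeasurable
    (P.measurableSet_occSet hXi)).prodMk P.u_meas.aemeasurable) hφ

theorem integral_occ_dynamics {F : Type*} [NormedAddCommGroup F] [NormedSpace ℝ F] {i : Fin r}
    (hXi : IsClosed (X i)) {L : EuclideanSpace ℝ (Fin n) → EuclideanSpace ℝ (Fin n) →L[ℝ] F}
    (hL : Continuous L) :
    ∫ p, L p.1 (A i p.1 + a i + B i p.2) ∂(P.occ i) = ∫ t in P.occSet i, L (P.x t) (P.d t) := by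
  rw [P.integral_occ hXi (by fun_prop)]
  refine setIntegral_congr_ae (P.measurableSet_occSet hXi) ?_
  filter_upwards [ae_imp_of_ae_restrict P.ode] with t ht hmem
  rw [ht hmem.1 i hmem.2]

theorem iUnion_occSet : ⋃ i, P.occSet i = Icc 0 P.T := by
  refine Subset.antisymm (iUnion_subset fun i t ht => ht.1) fun t ht => ?_
  obtain ⟨i, hi⟩ := mem_iUnion.1 (P.x_mem t ht)
  exact mem_iUnion.2 ⟨i, ht, hi⟩

theorem pairwise_aedisjoint_occSet : Pairwise (AEDisjoint volume on P.occSet) := by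
  refine fun i j hij => measure_mono_null (fun t ht => ?_) P.overlap
  exact ⟨ht.1.1, i, j, hij, ht.1.2, ht.2.2⟩

theorem sum_setIntegral_occSet {F : Type*} [NormedAddCommGroup F] [NormedSpace ℝ F]
    (hX : ∀ i, IsClosed (X i)) {g : ℝ → F} (hg : IntegrableOn g (Icc 0 P.T)) :
    ∑ i, ∫ t in P.occSet i, g t = ∫ t in Icc 0 P.T, g t := by
  rw [← P.iUnion_occSet, integral_iUnion_ae
    (fun i => (P.measurableSet_occSet (hX i)).nullMeasurableSet) P.pairwise_aedisjoint_occSet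
    (P.iUnion_occSet ▸ hg), tsum_fintype]

theorem integrableOn_fderiv_comp {v : EuclideanSpace ℝ (Fin n) → ℝ} (hv : ContDiff ℝ 1 v) :
    IntegrableOn (fun t => fderiv ℝ v (P.x t) (P.d t)) (Icc 0 P.T) :=
  (intervalIntegrable_iff_integrableOn_Icc_of_le P.T_pos.le).1
    (intervalIntegrable_fderiv_comp hv P.T_pos.le P.intervalIntegrable_d P.x_eq)

theorem setIntegral_fderiv_comp {v : EuclideanSpace ℝ (Fin n) → ℝ} (hv : ContDiff ℝ 1 v) :
    ∫ t in Icc 0 P.T, fderiv ℝ v (P.x t) (P.d t) = v (P.x P.T) - v (P.x 0) := by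
  rw [integral_Icc_eq_integral_Ioc, ← intervalIntegral.integral_of_le P.T_pos.le,
    integral_fderiv_comp_eq_sub hv P.T_pos.le P.intervalIntegrable_d P.x_eq]

end PWAProcess

theorem pwa_occupation_identity_general {n m r : ℕ}
    (X : Fin r → Set (EuclideanSpace ℝ (Fin n))) (hX : ∀ i, IsCompact (X i))
    (U : Set (EuclideanSpace ℝ (Fin m)))
    (A : Fin r → (EuclideanSpace ℝ (Fin n) →L[ℝ] EuclideanSpace ℝ (Fin n)))
    (a : Fin r → EuclideanSpace ℝ (Fin n))
    (B : Fin r → (EuclideanSpace ℝ (Fin m) →L[ℝ] EuclideanSpace ℝ (Fin n)))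
    (XT : Set (EuclideanSpace ℝ (Fin n)))
    (P : PWAProcess n m r X U A a B XT)
    (v : EuclideanSpace ℝ (Fin n) → ℝ) (hv : ContDiff ℝ 1 v) :
    ∑ i, ∫ p, ⟪gradient v p.1, A i p.1 + a i + B i p.2⟫ ∂(P.occ i)
      = v (P.x P.T) - v (P.x 0) := by
  have hXc : ∀ i, IsClosed (X i) := fun i => (hX i).isClosed
  have hL : Continuous (fderiv ℝ v) := hv.continuous_fderiv one_ne_zero
  simp_rw [gradient, InnerProductSpace.toDual_symm_apply]
  rw [Finset.sum_congr rfl fun i _ => P.integral_occ_dynamics (hXc i) hL,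
    P.sum_setIntegral_occSet hXc (P.integrableOn_fderiv_comp hv), P.setIntegral_fderiv_comp hv]

/-- For every admissible process of the PWA optimal control problem and every
`C¹` function `v`, the local occupation measures satisfy
`Σᵢ ∫ ⟪∇v(y), Aᵢ y + aᵢ + Bᵢ w⟫ dμᵢ(y,w) = v(x(T)) - v(x(0))`. -/
theorem pwa_occupation_identity {n m r : ℕ}
    (X : Fin r → Set (EuclideanSpace ℝ (Fin n))) (hX : ∀ i, IsCompact (X i))
    (hdisj : ∀ i j, i ≠ j → Disjoint (interior (X i)) (interior (X j)))
    (U : Set (EuclideanSpace ℝ (Fin m))) (hU : IsCompact U)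
    (A : Fin r → (EuclideanSpace ℝ (Fin n) →L[ℝ] EuclideanSpace ℝ (Fin n)))
    (a : Fin r → EuclideanSpace ℝ (Fin n))
    (B : Fin r → (EuclideanSpace ℝ (Fin m) →L[ℝ] EuclideanSpace ℝ (Fin n)))
    (XT : Set (EuclideanSpace ℝ (Fin n))) (hXT : IsCompact XT)
    (P : PWAProcess n m r X U A a B XT)
    (v : EuclideanSpace ℝ (Fin n) → ℝ) (hv : ContDiff ℝ 1 v) :
    ∑ i, ∫ p, ⟪gradient v p.1, A i p.1 + a i + B i p.2⟫ ∂(P.occ i)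
      = v (P.x P.T) - v (P.x 0) :=
  pwa_occupation_identity_general X hX U A a B XT P v hv
end

section
/- (Weak duality between the measure LP and the dual LP on functions.) Let μ₁,…,μ_r, μ_T, μ₀ be a feasible measure tuple for the LP with initial measure μ₀. If w : ℝⁿ → ℝ is continuously differentiable and satisfies ∇w(y) · (A_i y + a_i + B_i u) + L_i(y,u) ≥ 0 for every i and every (y,u) ∈ X_i × U, and w(y) ≤ L_T(y) for every y ∈ X_T, then Σ_{i=1}^r ∫ L_i dμ_i + ∫ L_T dμ_T ≥ ∫ w dμ₀. -/
open MeasureTheory Set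
open scoped RealInnerProductSpace

/-!
Testing the feasibility identity with `v = w` gives `Σᵢ ∫ ⟪∇w, fᵢ⟫ dμᵢ = ∫ w dμ_T - ∫ w dμ₀`.
Integrating the subsolution inequalities against the measures, which are finite and concentrated
on the compact sets where those inequalities hold, bounds `-∫ ⟪∇w, fᵢ⟫ dμᵢ` by `∫ Lᵢ dμᵢ` and
`∫ w dμ_T` by `∫ L_T dμ_T`; adding up gives the claim.
-/

theorem ContDiff.continuous_gradient_s5 {𝕜 F : Type*} [RCLike 𝕜] [NormedAddCommGroup F]
    [InnerProductSpace 𝕜 F] [CompleteSpace F] {f : F → 𝕜} {n : WithTop ℕ∞}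
    (hf : ContDiff 𝕜 n f) (hn : n ≠ 0) : Continuous (gradient f) :=
  (InnerProductSpace.toDual 𝕜 F).symm.continuous.comp (hf.continuous_fderiv hn)

section ConcentratedOnCompact

variable {α E : Type*} [MeasurableSpace α] [TopologicalSpace α] [OpensMeasurableSpace α]
  [T2Space α] {μ : Measure α} [IsFiniteMeasure μ] {K : Set α}

theorem Continuous.integrable_of_measure_compl_eq_zero [NormedAddCommGroup E] {f : α → E}
    (hK : IsCompact K) (hμ : μ Kᶜ = 0) (hf : Continuous f) : Integrable f μ := by
  rw [← Measure.restrict_eq_self_of_ae_mem (mem_ae_iff.mpr hμ)]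
  exact hf.continuousOn.integrableOn_compact hK

theorem integral_mono_of_le_on_of_measure_compl_eq_zero {f g : α → ℝ} (hK : IsCompact K)
    (hμ : μ Kᶜ = 0) (hf : Continuous f) (hg : Continuous g) (hfg : ∀ x ∈ K, f x ≤ g x) :
    ∫ x, f x ∂μ ≤ ∫ x, g x ∂μ := by
  have hK_ae : ∀ᵐ x ∂μ, x ∈ K := mem_ae_iff.mpr hμ
  exact integral_mono_ae (hf.integrable_of_measure_compl_eq_zero hK hμ)
    (hg.integrable_of_measure_compl_eq_zero hK hμ) (hK_ae.mono hfg)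

end ConcentratedOnCompact

theorem lp_weak_duality_general {n m r : ℕ}
    (X : Fin r → Set (EuclideanSpace ℝ (Fin n))) (hX : ∀ i, IsCompact (X i))
    (U : Set (EuclideanSpace ℝ (Fin m))) (hU : IsCompact U)
    (A : Fin r → (EuclideanSpace ℝ (Fin n) →L[ℝ] EuclideanSpace ℝ (Fin n)))
    (a : Fin r → EuclideanSpace ℝ (Fin n))
    (B : Fin r → (EuclideanSpace ℝ (Fin m) →L[ℝ] EuclideanSpace ℝ (Fin n)))
    (L : Fin r → (EuclideanSpace ℝ (Fin n) × EuclideanSpace ℝ (Fin m) → ℝ))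
    (hL : ∀ i, Continuous (L i))
    (LT : EuclideanSpace ℝ (Fin n) → ℝ) (hLT : Continuous LT)
    (XT : Set (EuclideanSpace ℝ (Fin n))) (hXT : IsCompact XT)
    (μ0 : Measure (EuclideanSpace ℝ (Fin n)))
    (μ : Fin r → Measure (EuclideanSpace ℝ (Fin n) × EuclideanSpace ℝ (Fin m)))
    (hμfin : ∀ i, IsFiniteMeasure (μ i))
    (hμsupp : ∀ i, μ i (X i ×ˢ U)ᶜ = 0)
    (μT : Measure (EuclideanSpace ℝ (Fin n))) [IsProbabilityMeasure μT]
    (hμT : μT XTᶜ = 0)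
    (hfeas : ∀ v : EuclideanSpace ℝ (Fin n) → ℝ, ContDiff ℝ 1 v →
      ∑ i, ∫ p, ⟪gradient v p.1, A i p.1 + a i + B i p.2⟫ ∂(μ i)
        = (∫ y, v y ∂μT) - ∫ y, v y ∂μ0)
    (w : EuclideanSpace ℝ (Fin n) → ℝ) (hw : ContDiff ℝ 1 w)
    (hwpos : ∀ i, ∀ y ∈ X i, ∀ u ∈ U,
      0 ≤ ⟪gradient w y, A i y + a i + B i u⟫ + L i (y, u))
    (hwT : ∀ y ∈ XT, w y ≤ LT y) :
    ∫ y, w y ∂μ0 ≤ (∑ i, ∫ p, L i p ∂(μ i)) + ∫ y, LT y ∂μT := by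
  have hH : ∀ i, Continuous fun p : EuclideanSpace ℝ (Fin n) × EuclideanSpace ℝ (Fin m) =>
      ⟪gradient w p.1, A i p.1 + a i + B i p.2⟫ := fun i =>
    (hw.continuous_gradient_s5 one_ne_zero).fst'.inner
      (((A i).continuous.fst'.add continuous_const).add (B i).continuous.snd')
  have hrunning : ∀ i, -∫ p, ⟪gradient w p.1, A i p.1 + a i + B i p.2⟫ ∂(μ i)
      ≤ ∫ p, L i p ∂(μ i) := fun i => by
    have := hμfin i
    rw [← integral_neg]
    exact integral_mono_of_le_on_of_measure_compl_eq_zero ((hX i).prod hU) (hμsupp i)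
      (hH i).neg (hL i) fun p hp => by linarith [hwpos i p.1 hp.1 p.2 hp.2]
  have hterminal : ∫ y, w y ∂μT ≤ ∫ y, LT y ∂μT :=
    integral_mono_of_le_on_of_measure_compl_eq_zero hXT hμT hw.continuous hLT hwT
  have hdual := hfeas w hw
  have hsum := Finset.sum_le_sum fun i (_ : i ∈ Finset.univ) => hrunning i
  rw [Finset.sum_neg_distrib] at hsum
  linarith

/-- weak duality between the measure LP and the dual LP on functions.
If `(μ₁,…,μ_r, μ_T)` is feasible for the LP with initial measure `μ₀` and `w` is a `C¹`
subsolution of the HJB system (`⟪∇w(y), Aᵢy + aᵢ + Bᵢu⟫ + Lᵢ(y,u) ≥ 0` on `Xᵢ × U`,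
`w ≤ L_T` on `X_T`), then `Σᵢ ∫ Lᵢ dμᵢ + ∫ L_T dμ_T ≥ ∫ w dμ₀`. -/
theorem lp_weak_duality {n m r : ℕ}
    (X : Fin r → Set (EuclideanSpace ℝ (Fin n))) (hX : ∀ i, IsCompact (X i))
    (U : Set (EuclideanSpace ℝ (Fin m))) (hU : IsCompact U)
    (A : Fin r → (EuclideanSpace ℝ (Fin n) →L[ℝ] EuclideanSpace ℝ (Fin n)))
    (a : Fin r → EuclideanSpace ℝ (Fin n))
    (B : Fin r → (EuclideanSpace ℝ (Fin m) →L[ℝ] EuclideanSpace ℝ (Fin n)))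
    (L : Fin r → (EuclideanSpace ℝ (Fin n) × EuclideanSpace ℝ (Fin m) → ℝ))
    (hL : ∀ i, Continuous (L i))
    (LT : EuclideanSpace ℝ (Fin n) → ℝ) (hLT : Continuous LT)
    (XT X0 : Set (EuclideanSpace ℝ (Fin n))) (hXT : IsCompact XT) (hX0 : IsCompact X0)
    (μ0 : Measure (EuclideanSpace ℝ (Fin n))) [IsProbabilityMeasure μ0]
    (hμ0 : μ0 X0ᶜ = 0)
    (μ : Fin r → Measure (EuclideanSpace ℝ (Fin n) × EuclideanSpace ℝ (Fin m)))
    (hμfin : ∀ i, IsFiniteMeasure (μ i))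
    (hμsupp : ∀ i, μ i (X i ×ˢ U)ᶜ = 0)
    (μT : Measure (EuclideanSpace ℝ (Fin n))) [IsProbabilityMeasure μT]
    (hμT : μT XTᶜ = 0)
    (hfeas : ∀ v : EuclideanSpace ℝ (Fin n) → ℝ, ContDiff ℝ 1 v →
      ∑ i, ∫ p, ⟪gradient v p.1, A i p.1 + a i + B i p.2⟫ ∂(μ i)
        = (∫ y, v y ∂μT) - ∫ y, v y ∂μ0)
    (w : EuclideanSpace ℝ (Fin n) → ℝ) (hw : ContDiff ℝ 1 w)
    (hwpos : ∀ i, ∀ y ∈ X i, ∀ u ∈ U,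
      0 ≤ ⟪gradient w y, A i y + a i + B i u⟫ + L i (y, u))
    (hwT : ∀ y ∈ XT, w y ≤ LT y) :
    ∫ y, w y ∂μ0 ≤ (∑ i, ∫ p, L i p ∂(μ i)) + ∫ y, LT y ∂μT :=
  lp_weak_duality_general X hX U hU A a B L hL LT hLT XT hXT μ0 μ hμfin hμsupp μT hμT hfeas w hw
    hwpos hwT
end

section
/- For the scalar PWA example with the optimal feedback k*(x) = −x − 1 + √(2(x − 1)² + (x + 1)²) on the cell X₂ = {x ≤ 0}, the closed-loop vector field satisfies x + 1 + k*(x) = √(2(x − 1)² + (x + 1)²) ≥ √3 for every x ≤ 0. Consequently, if x : [0,τ] → (−∞, 0] is differentiable with x'(t) = x(t) + 1 + k*(x(t)) for all t ∈ [0,τ] and x(0) = x₀ ≤ 0, then τ ≤ −x₀/√3; i.e. the closed-loop trajectory leaves the cell X₂ in finite time at most −x₀/√3. -/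
/-!
On `x ≤ 0` the closed-loop speed `√(2(x-1)² + (x+1)²) = √(3 + x(3x - 2))` is at least `√3`,
so by the mean value inequality a trajectory starting at `x₀ ≤ 0` has gained at least `√3 τ` by
time `τ`; since it is still in `{x ≤ 0}`, `x₀ + √3 τ ≤ 0`.
-/

open Set

lemma mul_sub_le_sub_of_hasDerivAt_Icc {f f' : ℝ → ℝ} {a b C : ℝ} (hab : a ≤ b)
    (hf : ∀ t ∈ Icc a b, HasDerivAt f (f' t) t) (hC : ∀ t ∈ Icc a b, C ≤ f' t) :
    C * (b - a) ≤ f b - f a := by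
  have mem_Icc : ∀ t ∈ interior (Icc a b), t ∈ Icc a b := fun t ht => interior_subset ht
  exact (convex_Icc a b).mul_sub_le_image_sub_of_le_deriv
    (fun t ht => (hf t ht).continuousAt.continuousWithinAt)
    (fun t ht => (hf t (mem_Icc t ht)).differentiableAt.differentiableWithinAt)
    (fun t ht => (hf t (mem_Icc t ht)).deriv ▸ hC t (mem_Icc t ht))
    a (left_mem_Icc.2 hab) b (right_mem_Icc.2 hab) hab

lemma le_neg_div_of_le_hasDerivAt_of_nonpos {x v : ℝ → ℝ} {τ c : ℝ} (hτ : 0 ≤ τ) (hc : 0 < c)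
    (hx : ∀ t ∈ Icc 0 τ, HasDerivAt x (v t) t) (hv : ∀ t ∈ Icc 0 τ, c ≤ v t)
    (hxτ : x τ ≤ 0) : τ ≤ -x 0 / c := by
  have growth := mul_sub_le_sub_of_hasDerivAt_Icc hτ hx hv
  rw [le_div_iff₀ hc]
  linarith

lemma three_le_two_mul_sub_one_sq_add_add_one_sq {x : ℝ} (hx : x ≤ 0) :
    3 ≤ 2 * (x - 1) ^ 2 + (x + 1) ^ 2 := by
  nlinarith

/-- With the optimal feedback `k*(x) = −x − 1 + √(2(x−1)² + (x+1)²)` on the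
cell `X₂ = {x ≤ 0}`, the closed-loop vector field satisfies
`x + 1 + k*(x) = √(2(x−1)² + (x+1)²) ≥ √3` for every `x ≤ 0`; consequently, any
differentiable closed-loop trajectory `x : [0,τ] → (−∞,0]` with `x(0) = x₀ ≤ 0` satisfies
`τ ≤ −x₀/√3`, i.e. it leaves the cell `X₂` in finite time at most `−x₀/√3`. -/
theorem scalar_pwa_cell2_exit_time (k : ℝ → ℝ)
    (hk : k = fun x => -x - 1 + Real.sqrt (2 * (x - 1) ^ 2 + (x + 1) ^ 2)) :
    (∀ x : ℝ, x ≤ 0 →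
      x + 1 + k x = Real.sqrt (2 * (x - 1) ^ 2 + (x + 1) ^ 2) ∧
      Real.sqrt 3 ≤ Real.sqrt (2 * (x - 1) ^ 2 + (x + 1) ^ 2)) ∧
    ∀ (τ : ℝ) (x : ℝ → ℝ) (x₀ : ℝ), 0 ≤ τ → x₀ ≤ 0 → x 0 = x₀ →
      (∀ t ∈ Set.Icc (0 : ℝ) τ, x t ≤ 0) →
      (∀ t ∈ Set.Icc (0 : ℝ) τ, HasDerivAt x (x t + 1 + k (x t)) t) →
      τ ≤ -x₀ / Real.sqrt 3 := by
  have closed_loop : ∀ x : ℝ, x ≤ 0 →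
      x + 1 + k x = Real.sqrt (2 * (x - 1) ^ 2 + (x + 1) ^ 2) ∧
      Real.sqrt 3 ≤ Real.sqrt (2 * (x - 1) ^ 2 + (x + 1) ^ 2) := fun x hx =>
    ⟨by rw [hk]; ring, Real.sqrt_le_sqrt (three_le_two_mul_sub_one_sq_add_add_one_sq hx)⟩
  refine ⟨closed_loop, fun τ x x₀ hτ _ hx₀ hx_nonpos hx_deriv => hx₀ ▸ ?_⟩
  have speed : ∀ t ∈ Icc 0 τ, Real.sqrt 3 ≤ x t + 1 + k (x t) := fun t ht => by
    obtain ⟨field_eq, sqrt_three_le⟩ := closed_loop (x t) (hx_nonpos t ht)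
    exact field_eq ▸ sqrt_three_le
  exact le_neg_div_of_le_hasDerivAt_of_nonpos hτ (by positivity) hx_deriv speed
    (hx_nonpos τ (right_mem_Icc.2 hτ))
end
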